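/- In the multi-agent CARA setting, fix n ≥ 2 and an agent index i, let b_i, η_i, σ_i, α_i, ξ_i ∈ ℝ with η_i² + σ_i² > 0, λ_i ≥ 0, λ_j ≥ 0 (j ≠ i), λ₀ ≥ 0, fixed controls u_j ∈ ℝ for j ≠ i, parameters ϱ_i > 0 and ϖ_i ∈ ℝ with ϖ_i ≠ n, and define χ := (1 − ϖ_i/n)/ϱ_i (so χ ≠ 0), ρ := ϖ_i/ϱ_i, the aggregates û·b, û·σ, û·ξ, the generator 𝓛^u and the function Θ exactly as follows: û·b := (1/n)Σ_{j≠i}u_j b_j, û·σ := (1/n)Σ_{j≠i}u_j σ_j, û·ξ := (1/n)Σ_{j≠i}u_j ξ_j; (𝓛^u φ)(x,y) := u b_i φ_x + û·b φ_y + (1/2)(η_i² + σ_i²)u² φ_{xx} + (1/2)((û·σ)² + (1/n²)Σ_{j≠i}u_j²η_j²) φ_{yy} + u σ_i (û·σ) φ_{xy} + λ_i(φ(x + uα_i, y) − φ(x, y) − uα_i φ_x) + Σ_{j≠i} λ_j(φ(x, y + u_jα_j/n) − φ(x, y) − (u_jα_j/n) φ_y) + λ₀(φ(x + uξ_i, y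 + û·ξ) − φ(x, y) − uξ_i φ_x − û·ξ φ_y); Θ(u) := −χ b_i u + ρ û·b + (1/2)χ²(η_i² + σ_i²)u² + (1/2)ρ²((û·σ)² + (1/n²)Σ_{j≠i}u_j²η_j²) − χρσ_i(û·σ)u + λ_i(e^{−χα_i u} − 1 + χα_i u) + Σ_{j≠i} λ_j(e^{ρ u_jα_j/n} − 1 − ρ u_jα_j/n) + λ₀(e^{−χξ_i u + ρ û·ξ} − 1 + χξ_i u − ρ û·ξ). Then Θ is strictly convex on ℝ, and if u* ∈ ℝ satisfies Θ'(u*) = 0 and β > Λ* := Θ(u*) for some β > 0, then the function V(x, y) := −(β − Λ*)⁻¹ exp(−(χx − ρy)) satisfies, for every (x, y) ∈ ℝ², β V(x, y) = sup_{u ∈ ℝ} { (𝓛^u V)(x, y) + f_i(x, y) }, where f_i(x, y) := −exp(−(1/ϱ_i)((1 − ϖ_i/n)x − ϖ_i y)), and the supremum is attained uniquely at u = u*. -/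

import Mathlib

/-- The generator of the pair `(X^i, Y^i)` in the multi-agent CARA portfolio game,
with partial derivatives written via `deriv`: `uu` is agent `i`'s control, `u j` the
fixed controls of the other agents, and the jump parts use the idiosyncratic sizes
`α` (intensities `lam`) and common size `ξ` (intensity `lam₀`). -/
noncomputable def caraGen (n : ℕ) (i : Fin n)
    (b η σv α ξ lam u : Fin n → ℝ) (lam₀ : ℝ)
    (uu : ℝ) (φ : ℝ → ℝ → ℝ) (x y : ℝ) : ℝ :=
  let ub := (1 / (n : ℝ)) * ∑ j ∈ Finset.univ.erase i, u j * b j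
  let usig := (1 / (n : ℝ)) * ∑ j ∈ Finset.univ.erase i, u j * σv j
  let uxi := (1 / (n : ℝ)) * ∑ j ∈ Finset.univ.erase i, u j * ξ j
  let φx := deriv (fun x' => φ x' y) x
  let φy := deriv (fun y' => φ x y') y
  let φxx := deriv (fun x' => deriv (fun x'' => φ x'' y) x') x
  let φyy := deriv (fun y' => deriv (fun y'' => φ x y'') y') y
  let φxy := deriv (fun y' => deriv (fun x' => φ x' y') x) y
  uu * b i * φx + ub * φy
    + (1 / 2) * (η i ^ 2 + σv i ^ 2) * uu ^ 2 * φxx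
    + (1 / 2) * (usig ^ 2
        + (1 / (n : ℝ) ^ 2) * ∑ j ∈ Finset.univ.erase i, u j ^ 2 * η j ^ 2) * φyy
    + uu * σv i * usig * φxy
    + lam i * (φ (x + uu * α i) y - φ x y - uu * α i * φx)
    + (∑ j ∈ Finset.univ.erase i, lam j *
        (φ x (y + u j * α j / (n : ℝ)) - φ x y - (u j * α j / (n : ℝ)) * φy))
    + lam₀ * (φ (x + uu * ξ i) (y + uxi) - φ x y - uu * ξ i * φx - uxi * φy)

/-- The state-independent exponent function `Θ` of agent `i` in the multi-agent CARA
portfolio game. -/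
noncomputable def caraTheta (n : ℕ) (i : Fin n)
    (b η σv α ξ lam u : Fin n → ℝ) (lam₀ χ ρ : ℝ) (uu : ℝ) : ℝ :=
  let ub := (1 / (n : ℝ)) * ∑ j ∈ Finset.univ.erase i, u j * b j
  let usig := (1 / (n : ℝ)) * ∑ j ∈ Finset.univ.erase i, u j * σv j
  let uxi := ((1 / (n : ℝ)) * ∑ j ∈ Finset.univ.erase i, u j * ξ j)
  (-χ * b i * uu) + ρ * ub
    + (1 / 2) * χ ^ 2 * (η i ^ 2 + σv i ^ 2) * uu ^ 2
    + (1 / 2) * ρ ^ 2 * (usig ^ 2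
        + (1 / (n : ℝ) ^ 2) * ∑ j ∈ Finset.univ.erase i, u j ^ 2 * η j ^ 2)
    - χ * ρ * σv i * usig * uu
    + lam i * (Real.exp (-(χ * α i * uu)) - 1 + χ * α i * uu)
    + (∑ j ∈ Finset.univ.erase i, lam j *
        (Real.exp (ρ * u j * α j / (n : ℝ)) - 1 - ρ * u j * α j / (n : ℝ)))
    + lam₀ * (Real.exp (-(χ * ξ i * uu) + ρ * uxi) - 1 + χ * ξ i * uu - ρ * uxi)

/-! For `V = k e^{-(χx - ρy)}` every partial derivative and every jump increment of `V` is `V`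
times a factor independent of `(x, y)`, so `𝓛^u V = V · Θ(u)` and `f = (β - Θ(u*)) V`. The HJB
equation at `u*` is then an identity, and since `V < 0`, maximising `𝓛^u V + f` amounts to
minimising `Θ`. As a positive quadratic plus nonnegative multiples of exponentials of linear
functions, `Θ` is strictly convex, so its critical point `u*` is its unique minimiser. -/

open Set Real

theorem strictConvexOn_univ_quadratic {c : ℝ} (hc : 0 < c) (p q : ℝ) :
    StrictConvexOn ℝ univ fun x : ℝ => c * x ^ 2 + p * x + q := by
  refine ⟨convex_univ, fun x _ y _ hxy s t hs ht hst => ?_⟩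
  have hgap : 0 < c * (s * t * (x - y) ^ 2) :=
    mul_pos hc (mul_pos (mul_pos hs ht) (sq_pos_iff.2 (sub_ne_zero.2 hxy)))
  obtain rfl : t = 1 - s := by linarith
  simp only [smul_eq_mul]
  linear_combination hgap

theorem convexOn_univ_const_mul_exp_mul {l : ℝ} (hl : 0 ≤ l) (a : ℝ) :
    ConvexOn ℝ univ fun x : ℝ => l * exp (a * x) := by
  refine ⟨convex_univ, fun x _ y _ s t hs ht hst => ?_⟩
  have hexp := convexOn_exp.2 (mem_univ (a * x)) (mem_univ (a * y)) hs ht hst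
  simp only [smul_eq_mul] at hexp ⊢
  rw [show a * (s * x + t * y) = s * (a * x) + t * (a * y) by ring]
  linear_combination mul_le_mul_of_nonneg_left hexp hl

theorem StrictConvexOn.lt_of_deriv_eq_zero {s : Set ℝ} {f : ℝ → ℝ} {x y : ℝ}
    (hf : StrictConvexOn ℝ s f) (hx : x ∈ interior s) (hy : y ∈ s)
    (hd : DifferentiableAt ℝ f x) (h0 : deriv f x = 0) (hxy : y ≠ x) : f x < f y := by
  have hmin : IsMinOn f s x := hf.convexOn.isMinOn_of_rightDeriv_eq_zero hx
    (by rw [hd.derivWithin (uniqueDiffWithinAt_Ioi x), h0])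
  refine (hmin hy).lt_of_ne fun heq => hxy ?_
  exact hf.eq_of_isMinOn (fun z hz => heq ▸ hmin hz) hmin hy (interior_subset hx)

section Theta

variable (n : ℕ) (i : Fin n) (b η σv α ξ lam u : Fin n → ℝ) (lam₀ χ ρ : ℝ)

theorem exists_caraTheta_eq_quadratic_add_exp : ∃ p q : ℝ,
    caraTheta n i b η σv α ξ lam u lam₀ χ ρ = fun uu =>
      (1 / 2 * χ ^ 2 * (η i ^ 2 + σv i ^ 2)) * uu ^ 2 + p * uu + q
        + lam i * exp (-(χ * α i) * uu)
        + lam₀ * exp (ρ * ((1 / n) * ∑ j ∈ Finset.univ.erase i, u j * ξ j))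
          * exp (-(χ * ξ i) * uu) := by
  let usig := (1 / (n : ℝ)) * ∑ j ∈ Finset.univ.erase i, u j * σv j
  let uxi := (1 / (n : ℝ)) * ∑ j ∈ Finset.univ.erase i, u j * ξ j
  refine ⟨-(χ * b i) - χ * ρ * σv i * usig + lam i * (χ * α i) + lam₀ * (χ * ξ i),
    ρ * ((1 / n) * ∑ j ∈ Finset.univ.erase i, u j * b j)
      + 1 / 2 * ρ ^ 2
        * (usig ^ 2 + (1 / (n : ℝ) ^ 2) * ∑ j ∈ Finset.univ.erase i, u j ^ 2 * η j ^ 2)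
      - lam i
      + ∑ j ∈ Finset.univ.erase i, lam j * (exp (ρ * u j * α j / n) - 1 - ρ * u j * α j / n)
      - lam₀ * (1 + ρ * uxi), funext fun uu => ?_⟩
  simp only [caraTheta, usig, uxi, exp_add]
  ring_nf

variable {n i b η σv α ξ lam u lam₀ χ ρ}

theorem strictConvexOn_caraTheta (hlam : 0 ≤ lam i) (hlam₀ : 0 ≤ lam₀) (hχ : χ ≠ 0)
    (hdiff : 0 < η i ^ 2 + σv i ^ 2) :
    StrictConvexOn ℝ univ (caraTheta n i b η σv α ξ lam u lam₀ χ ρ) := by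
  obtain ⟨p, q, hΘ⟩ := exists_caraTheta_eq_quadratic_add_exp n i b η σv α ξ lam u lam₀ χ ρ
  rw [hΘ]
  have hc : 0 < 1 / 2 * χ ^ 2 * (η i ^ 2 + σv i ^ 2) :=
    mul_pos (mul_pos one_half_pos (sq_pos_iff.2 hχ)) hdiff
  exact ((strictConvexOn_univ_quadratic hc p q).add_convexOn
    (convexOn_univ_const_mul_exp_mul hlam _)).add_convexOn
    (convexOn_univ_const_mul_exp_mul (by positivity) _)

theorem differentiable_caraTheta :
    Differentiable ℝ (caraTheta n i b η σv α ξ lam u lam₀ χ ρ) := by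
  obtain ⟨p, q, hΘ⟩ := exists_caraTheta_eq_quadratic_add_exp n i b η σv α ξ lam u lam₀ χ ρ
  rw [hΘ]
  fun_prop

end Theta

section ExpAffine

variable {k χ ρ : ℝ} {φ : ℝ → ℝ → ℝ} (hφ : φ = fun x y => k * exp (-(χ * x - ρ * y)))
include hφ

namespace ExpAffine

theorem hasDerivAt_fst (x y : ℝ) : HasDerivAt (fun x' => φ x' y) (-χ * φ x y) x := by
  subst hφ
  have hlin : HasDerivAt (fun x' => -(χ * x' - ρ * y)) (-χ) x := by
    simpa using (((hasDerivAt_id' x).const_mul χ).sub_const (ρ * y)).fun_neg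
  exact (hlin.exp.const_mul k).congr_deriv (by beta_reduce; ring)

theorem hasDerivAt_snd (x y : ℝ) : HasDerivAt (fun y' => φ x y') (ρ * φ x y) y := by
  subst hφ
  have hlin : HasDerivAt (fun y' => -(χ * x - ρ * y')) ρ y := by
    simpa using (((hasDerivAt_id' y).const_mul ρ).const_sub (χ * x)).fun_neg
  exact (hlin.exp.const_mul k).congr_deriv (by beta_reduce; ring)

theorem deriv_fst (x y : ℝ) : deriv (fun x' => φ x' y) x = -χ * φ x y :=
  (hasDerivAt_fst hφ x y).deriv

theorem deriv_snd (x y : ℝ) : deriv (fun y' => φ x y') y = ρ * φ x y :=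
  (hasDerivAt_snd hφ x y).deriv

theorem deriv_deriv_fst (x y : ℝ) :
    deriv (fun x' => deriv (fun x'' => φ x'' y) x') x = χ ^ 2 * φ x y := by
  simp only [deriv_fst hφ]
  rw [((hasDerivAt_fst hφ x y).const_mul (-χ)).deriv]
  ring

theorem deriv_deriv_snd (x y : ℝ) :
    deriv (fun y' => deriv (fun y'' => φ x y'') y') y = ρ ^ 2 * φ x y := by
  simp only [deriv_snd hφ]
  rw [((hasDerivAt_snd hφ x y).const_mul ρ).deriv]
  ring

theorem deriv_deriv_snd_fst (x y : ℝ) :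
    deriv (fun y' => deriv (fun x' => φ x' y') x) y = -(χ * ρ) * φ x y := by
  simp only [deriv_fst hφ]
  rw [((hasDerivAt_snd hφ x y).const_mul (-χ)).deriv]
  ring

theorem apply_add_add (x y s t : ℝ) : φ (x + s) (y + t) = φ x y * exp (-(χ * s) + ρ * t) := by
  subst hφ
  rw [mul_assoc, ← exp_add]
  ring_nf

theorem apply_add_left (x y s : ℝ) : φ (x + s) y = φ x y * exp (-(χ * s)) := by
  simpa using apply_add_add hφ x y s 0

theorem apply_add_right (x y t : ℝ) : φ x (y + t) = φ x y * exp (ρ * t) := by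
  simpa using apply_add_add hφ x y 0 t

end ExpAffine

open ExpAffine in
theorem caraGen_eq_mul_caraTheta (n : ℕ) (i : Fin n) (b η σv α ξ lam u : Fin n → ℝ)
    (lam₀ uu x y : ℝ) :
    caraGen n i b η σv α ξ lam u lam₀ uu φ x y
      = φ x y * caraTheta n i b η σv α ξ lam u lam₀ χ ρ uu := by
  have hsum : ∑ j ∈ Finset.univ.erase i, lam j *
        (φ x (y + u j * α j / n) - φ x y - (u j * α j / n) * deriv (fun y' => φ x y') y)
      = φ x y * ∑ j ∈ Finset.univ.erase i, lam j *
          (exp (ρ * u j * α j / n) - 1 - ρ * u j * α j / n) := by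
    rw [Finset.mul_sum]
    refine Finset.sum_congr rfl fun j _ => ?_
    rw [apply_add_right hφ, deriv_snd hφ, show ρ * (u j * α j / n) = ρ * u j * α j / n by ring]
    ring
  simp only [caraGen, caraTheta]
  rw [hsum, deriv_deriv_fst hφ, deriv_deriv_snd hφ, deriv_deriv_snd_fst hφ, deriv_fst hφ,
    deriv_snd hφ, apply_add_left hφ, apply_add_add hφ]
  ring_nf

end ExpAffine

theorem cara_hjb_verification_general
    (n : ℕ) (i : Fin n)
    (b η σv α ξ lam u : Fin n → ℝ) (lam₀ : ℝ)
    (hlam : ∀ j, 0 ≤ lam j) (hlam₀ : 0 ≤ lam₀)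
    (hdiff : 0 < η i ^ 2 + σv i ^ 2)
    (ϱ ϖ : ℝ) (hϱ : 0 < ϱ) (hϖ : ϖ ≠ (n : ℝ))
    (χ ρ : ℝ) (hχ : χ = (1 - ϖ / (n : ℝ)) / ϱ) (hρ : ρ = ϖ / ϱ)
    (β : ℝ)
    (ustar : ℝ)
    (hcrit : deriv (caraTheta n i b η σv α ξ lam u lam₀ χ ρ) ustar = 0)
    (hβ : caraTheta n i b η σv α ξ lam u lam₀ χ ρ ustar < β)
    (V : ℝ → ℝ → ℝ)
    (hV : V = fun x y =>
        -(β - caraTheta n i b η σv α ξ lam u lam₀ χ ρ ustar)⁻¹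
          * Real.exp (-(χ * x - ρ * y)))
    (f : ℝ → ℝ → ℝ)
    (hf : f = fun x y => -Real.exp (-(1 / ϱ) * ((1 - ϖ / (n : ℝ)) * x - ϖ * y))) :
    StrictConvexOn ℝ Set.univ (caraTheta n i b η σv α ξ lam u lam₀ χ ρ) ∧
    ∀ x y : ℝ,
      (β * V x y = caraGen n i b η σv α ξ lam u lam₀ ustar V x y + f x y) ∧
      (∀ uu : ℝ, uu ≠ ustar →
        caraGen n i b η σv α ξ lam u lam₀ uu V x y + f x y
          < caraGen n i b η σv α ξ lam u lam₀ ustar V x y + f x y) := by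
  have hχ0 : χ ≠ 0 := by
    rw [hχ]
    refine div_ne_zero (fun h => hϖ ?_) hϱ.ne'
    have hdiv : ϖ / n = 1 := by linarith
    have hn0 : (n : ℝ) ≠ 0 := fun h0 => by simp [h0] at hdiv
    exact (div_eq_one_iff_eq hn0).1 hdiv
  have hconv : StrictConvexOn ℝ univ (caraTheta n i b η σv α ξ lam u lam₀ χ ρ) :=
    strictConvexOn_caraTheta (hlam i) hlam₀ hχ0 hdiff
  have hgap : 0 < β - caraTheta n i b η σv α ξ lam u lam₀ χ ρ ustar := sub_pos.2 hβ
  have hgen (uu x y : ℝ) := caraGen_eq_mul_caraTheta hV n i b η σv α ξ lam u lam₀ uu x y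
  have hfV (x y : ℝ) : f x y = (β - caraTheta n i b η σv α ξ lam u lam₀ χ ρ ustar) * V x y := by
    rw [hf, hV]
    beta_reduce
    rw [show -(1 / ϱ) * ((1 - ϖ / n) * x - ϖ * y) = -(χ * x - ρ * y) by rw [hχ, hρ]; ring]
    field_simp
  have hVneg (x y : ℝ) : V x y < 0 := by
    rw [hV]
    exact mul_neg_of_neg_of_pos (neg_neg_of_pos (inv_pos.2 hgap)) (exp_pos _)
  refine ⟨hconv, fun x y => ⟨by rw [hgen, hfV]; ring, fun uu hne => ?_⟩⟩
  rw [hgen, hgen, add_lt_add_iff_right]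
  exact mul_lt_mul_of_neg_left (hconv.lt_of_deriv_eq_zero (by simp) (mem_univ uu)
    (differentiable_caraTheta ustar) hcrit hne) (hVneg x y)

/-- Closed-form best-response value function of agent `i` in the infinite-horizon
discounted multi-agent CARA portfolio game: `Θ` is strictly convex, and if `u*` is a
critical point of `Θ` with `β > Λ* = Θ(u*)`, then
`V(x,y) = −(β − Λ*)⁻¹ exp(−(χx − ρy))` solves the stationary HJB equation
`βV = sup_u {𝓛^u V + fᵢ}`, the supremum being attained uniquely at `u*`. -/
theorem cara_hjb_verification
    (n : ℕ) (hn : 2 ≤ n) (i : Fin n)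
    (b η σv α ξ lam u : Fin n → ℝ) (lam₀ : ℝ)
    (hlam : ∀ j, 0 ≤ lam j) (hlam₀ : 0 ≤ lam₀)
    (hdiff : 0 < η i ^ 2 + σv i ^ 2)
    (ϱ ϖ : ℝ) (hϱ : 0 < ϱ) (hϖ : ϖ ≠ (n : ℝ))
    (χ ρ : ℝ) (hχ : χ = (1 - ϖ / (n : ℝ)) / ϱ) (hρ : ρ = ϖ / ϱ)
    (β : ℝ) (hβpos : 0 < β)
    (ustar : ℝ)
    (hcrit : deriv (caraTheta n i b η σv α ξ lam u lam₀ χ ρ) ustar = 0)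
    (hβ : caraTheta n i b η σv α ξ lam u lam₀ χ ρ ustar < β)
    (V : ℝ → ℝ → ℝ)
    (hV : V = fun x y =>
        -(β - caraTheta n i b η σv α ξ lam u lam₀ χ ρ ustar)⁻¹
          * Real.exp (-(χ * x - ρ * y)))
    (f : ℝ → ℝ → ℝ)
    (hf : f = fun x y => -Real.exp (-(1 / ϱ) * ((1 - ϖ / (n : ℝ)) * x - ϖ * y))) :
    StrictConvexOn ℝ Set.univ (caraTheta n i b η σv α ξ lam u lam₀ χ ρ) ∧
    ∀ x y : ℝ,
      (β * V x y = caraGen n i b η σv α ξ lam u lam₀ ustar V x y + f x y) ∧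
      (∀ uu : ℝ, uu ≠ ustar →
        caraGen n i b η σv α ξ lam u lam₀ uu V x y + f x y
          < caraGen n i b η σv α ξ lam u lam₀ ustar V x y + f x y) :=
  cara_hjb_verification_general n i b η σv α ξ lam u lam₀ hlam hlam₀ hdiff ϱ ϖ hϱ hϖ χ ρ hχ hρ β
    ustar hcrit hβ V hV f hf
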